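/- Let Z ∈ ℝ^{p×q} be such that ZᵀZ is invertible. Then the Laplacian of the function Z ↦ tr((ZᵀZ)^{-1}) satisfies Σ_{i=1}^p Σ_{j=1}^q ∂²/∂Z_{ij}² tr((ZᵀZ)^{-1}) = −2(p−q−2)·tr((ZᵀZ)^{-2}) + 2·(tr((ZᵀZ)^{-1}))². -/

import Mathlib

/-!
Put `W = (ZᵀZ)⁻¹` and `E = Eᵢⱼ`. Along the line `Z + tE` the Gram matrix is
`ZᵀZ + t B + t² C` with `B = EᵀZ + ZᵀE` and `C = EᵀE`, so differentiating the inverse twice gives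
the pure second partial `2 tr(W B W B W) - 2 tr(W C W)`. Summing over the matrix units collapses
through `∑ E Q E = Qᵀ`, `∑ E Q Eᵀ = tr Q • 1` and `∑ EᵀE = p • 1`: one finds
`∑ B W B = (q + 2) • 1 + tr W • ZᵀZ` and `∑ C = p • 1`, and the formula follows.
-/

open Matrix Filter Topology

theorem Matrix.transpose_add_smul_mul_add_smul {α m n : Type*} [Fintype m] [CommSemiring α]
    (Z E : Matrix m n α) (t : α) :
    (Z + t • E)ᵀ * (Z + t • E) = Zᵀ * Z + t • (Eᵀ * Z + Zᵀ * E) + t ^ 2 • (Eᵀ * E) := by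
  simp only [transpose_add, transpose_smul, Matrix.add_mul, Matrix.mul_add, Matrix.smul_mul,
    Matrix.mul_smul, smul_add, smul_smul, sq]
  abel

section SingleSums

variable {α : Type*} {m n : Type*} [Fintype m] [Fintype n] [DecidableEq m] [DecidableEq n]

theorem Matrix.sum_single_mul_mul_single [Semiring α] (Q : Matrix n m α) :
    ∑ i : m, ∑ j : n, single i j (1 : α) * Q * single i j (1 : α) = Qᵀ := by
  simp only [single_mul_mul_single, one_mul, mul_one]
  exact (matrix_eq_sum_single Qᵀ).symm

theorem Matrix.sum_single_mul_mul_single_swap [Semiring α] (Q : Matrix n n α) :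
    ∑ i : m, ∑ j : n, single i j (1 : α) * Q * single j i (1 : α) =
      trace Q • (1 : Matrix m m α) := by
  have h (i : m) : ∑ j : n, single i i (Q j j) = single i i (trace Q) :=
    (map_sum (singleAddMonoidHom (α := α) i i) _ _).symm
  simp only [single_mul_mul_single, one_mul, mul_one, h]
  rw [sum_single_eq_diagonal, smul_one_eq_diagonal]

theorem Matrix.sum_transpose_single_mul_single [Semiring α] :
    ∑ i : m, ∑ j : n, (single i j (1 : α))ᵀ * single i j (1 : α) =
      (Fintype.card m : α) • (1 : Matrix n n α) := by
  simp only [transpose_single, single_mul_single_same, one_mul, sum_single_one,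
    Finset.sum_const, Finset.card_univ, Nat.cast_smul_eq_nsmul]

-- `Eᵀ * Z + Zᵀ * E` is the derivative of `Z ↦ Zᵀ * Z` in the direction `E = single i j 1`.
theorem Matrix.sum_gramDeriv_mul_gramDeriv [CommSemiring α] (Z : Matrix m n α)
    (W : Matrix n n α) :
    ∑ i : m, ∑ j : n,
        ((single i j (1 : α))ᵀ * Z + Zᵀ * single i j (1 : α)) * W *
          ((single i j (1 : α))ᵀ * Z + Zᵀ * single i j (1 : α)) =
      Wᵀ * Zᵀ * Z + trace (Z * W * Zᵀ) • 1 + trace W • (Zᵀ * Z) + Zᵀ * Z * Wᵀ := by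
  have expand (i : m) (j : n) :
      ((single i j (1 : α))ᵀ * Z + Zᵀ * single i j (1 : α)) * W *
          ((single i j (1 : α))ᵀ * Z + Zᵀ * single i j (1 : α)) =
        single j i (1 : α) * (Z * W) * single j i (1 : α) * Z +
          single j i (1 : α) * (Z * W * Zᵀ) * single i j (1 : α) +
          Zᵀ * (single i j (1 : α) * W * single j i (1 : α)) * Z +
          Zᵀ * (single i j (1 : α) * (W * Zᵀ) * single i j (1 : α)) := by
    simp only [transpose_single, Matrix.add_mul, Matrix.mul_add, Matrix.mul_assoc]
    abel
  have h₁ : ∑ i : m, ∑ j : n, single j i (1 : α) * (Z * W) * single j i (1 : α) * Z =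
      Wᵀ * Zᵀ * Z := by
    rw [Finset.sum_comm]
    simp only [← Matrix.sum_mul, sum_single_mul_mul_single, transpose_mul]
  have h₂ : ∑ i : m, ∑ j : n, single j i (1 : α) * (Z * W * Zᵀ) * single i j (1 : α) =
      trace (Z * W * Zᵀ) • 1 := by
    rw [Finset.sum_comm, sum_single_mul_mul_single_swap]
  have h₃ : ∑ i : m, ∑ j : n, Zᵀ * (single i j (1 : α) * W * single j i (1 : α)) * Z =
      trace W • (Zᵀ * Z) := by
    simp only [← Matrix.sum_mul, ← Matrix.mul_sum, sum_single_mul_mul_single_swap,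
      Matrix.mul_smul, Matrix.smul_mul, Matrix.mul_one]
  have h₄ : ∑ i : m, ∑ j : n, Zᵀ * (single i j (1 : α) * (W * Zᵀ) * single i j (1 : α)) =
      Zᵀ * Z * Wᵀ := by
    simp only [← Matrix.mul_sum, sum_single_mul_mul_single]
    rw [transpose_mul, transpose_transpose, Matrix.mul_assoc]
  simp only [expand, Finset.sum_add_distrib, h₁, h₂, h₃, h₄]

end SingleSums

section InverseDerivative

-- Any norm would do: it only serves to differentiate matrix-valued curves.
attribute [local instance] Matrix.linftyOpNormedAddCommGroup Matrix.linftyOpNormedRing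
  Matrix.linftyOpNormedAlgebra

variable {𝕜 : Type*} [RCLike 𝕜] {n : Type*} [Fintype n] [DecidableEq n]

theorem HasDerivAt.matrix_trace {F : 𝕜 → Matrix n n 𝕜} {F' : Matrix n n 𝕜} {t : 𝕜}
    (hF : HasDerivAt F F' t) : HasDerivAt (fun s => trace (F s)) (trace F') t :=
  (traceLinearMap n 𝕜 𝕜).toContinuousLinearMap.hasFDerivAt.comp_hasDerivAt t hF

theorem HasDerivAt.matrix_inv {M : 𝕜 → Matrix n n 𝕜} {M' : Matrix n n 𝕜} {t : 𝕜}
    (hM : HasDerivAt M M' t) (ht : IsUnit (M t).det) :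
    HasDerivAt (fun s => (M s)⁻¹) (-((M t)⁻¹ * M' * (M t)⁻¹)) t := by
  obtain ⟨u, hu⟩ := (isUnit_iff_isUnit_det _).mpr ht
  have hinv := (hu ▸ hasFDerivAt_ringInverse (𝕜 := 𝕜) u).comp_hasDerivAt t hM
  have hfun : (fun s => (M s)⁻¹) = Ring.inverse ∘ M :=
    funext fun s => nonsing_inv_eq_ringInverse (M s)
  rw [hfun, ← hu, nonsing_inv_eq_ringInverse, Ring.inverse_unit]
  exact hinv.congr_deriv (by simp)

theorem iteratedDeriv_two_trace_inv_quadratic (A B C : Matrix n n 𝕜) (hA : IsUnit A.det) :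
    iteratedDeriv 2 (fun t : 𝕜 => trace ((A + t • B + t ^ 2 • C)⁻¹)) 0 =
      2 * trace (A⁻¹ * (B * A⁻¹ * B) * A⁻¹) - 2 * trace (A⁻¹ * C * A⁻¹) := by
  set M : 𝕜 → Matrix n n 𝕜 := fun t => A + t • B + t ^ 2 • C
  have hM (t : 𝕜) : HasDerivAt M (B + (2 * t) • C) t := by
    refine ((((hasDerivAt_id t).smul_const B).const_add A).add
      ((hasDerivAt_pow 2 t).smul_const C)).congr_deriv ?_
    simp
  have hM₀ : M 0 = A := by simp [M]
  have hunit : ∀ᶠ t in 𝓝 0, IsUnit (M t).det := by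
    have hcont : Continuous fun t => (M t).det := by fun_prop
    simpa only [isUnit_iff_ne_zero] using
      hcont.continuousAt.eventually_ne (by simpa [hM₀] using hA.ne_zero)
  have hderiv : deriv (fun t => trace (M t)⁻¹) =ᶠ[𝓝 0]
      fun t => -trace ((M t)⁻¹ * (B + (2 * t) • C) * (M t)⁻¹) :=
    hunit.mono fun t ht => by
      simpa using ((hM t).matrix_inv ht).matrix_trace.deriv
  have hinv₀ : HasDerivAt (fun t => (M t)⁻¹) (-(A⁻¹ * B * A⁻¹)) 0 := by
    simpa [hM₀] using (hM 0).matrix_inv (by rwa [hM₀])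
  have hlin : HasDerivAt (fun t : 𝕜 => B + (2 * t) • C) ((2 : 𝕜) • C) 0 := by
    refine (((hasDerivAt_id (0 : 𝕜)).const_mul 2).smul_const C |>.const_add B).congr_deriv ?_
    simp
  rw [iteratedDeriv_succ, iteratedDeriv_one, hderiv.deriv_eq]
  refine ((hinv₀.mul hlin).mul hinv₀).matrix_trace.neg.deriv.trans ?_
  simp only [Matrix.mul_assoc, mul_zero, zero_smul, add_zero, neg_mul, hM₀, Algebra.mul_smul_comm,
    Matrix.add_mul, Algebra.smul_mul_assoc, Pi.mul_apply, mul_neg, trace_add, trace_neg, trace_smul,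
    smul_eq_mul, neg_add_rev, neg_neg]
  ring

theorem iteratedDeriv_two_trace_inv_gram {m : Type*} [Fintype m] (Z E : Matrix m n 𝕜)
    (hZ : IsUnit (Zᵀ * Z).det) :
    iteratedDeriv 2 (fun t : 𝕜 => trace (((Z + t • E)ᵀ * (Z + t • E))⁻¹)) 0 =
      2 * trace ((Zᵀ * Z)⁻¹ * ((Eᵀ * Z + Zᵀ * E) * (Zᵀ * Z)⁻¹ * (Eᵀ * Z + Zᵀ * E)) *
          (Zᵀ * Z)⁻¹) -
        2 * trace ((Zᵀ * Z)⁻¹ * (Eᵀ * E) * (Zᵀ * Z)⁻¹) := by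
  simp_rw [transpose_add_smul_mul_add_smul]
  exact iteratedDeriv_two_trace_inv_quadratic _ _ _ hZ

end InverseDerivative

/-- Laplacian formula: the sum over all entries `(i,j)` of the second pure partial
derivative of `Z ↦ tr((ZᵀZ)⁻¹)` equals `-2(p-q-2) tr((ZᵀZ)⁻²) + 2 (tr((ZᵀZ)⁻¹))²`. -/
theorem stmt_11 (p q : ℕ) (Z : Matrix (Fin p) (Fin q) ℝ) (hZ : IsUnit (Zᵀ * Z).det) :
    ∑ i : Fin p, ∑ j : Fin q,
        iteratedDeriv 2 (fun t : ℝ =>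
          Matrix.trace (((Z + t • Matrix.single i j (1 : ℝ))ᵀ
              * (Z + t • Matrix.single i j (1 : ℝ)))⁻¹)) 0
      = -2 * ((p : ℝ) - q - 2) * Matrix.trace (((Zᵀ * Z)⁻¹) ^ 2)
        + 2 * Matrix.trace ((Zᵀ * Z)⁻¹) ^ 2 := by
  simp only [iteratedDeriv_two_trace_inv_gram _ _ hZ]
  set W := (Zᵀ * Z)⁻¹ with hW
  have hWt : Wᵀ = W := by rw [hW, transpose_nonsing_inv, transpose_mul, transpose_transpose]
  have hWZ : W * (Zᵀ * Z) = 1 := nonsing_inv_mul _ hZ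
  have hZW : Zᵀ * Z * W = 1 := mul_nonsing_inv _ hZ
  have htr : trace (Z * W * Zᵀ) = q := by
    rw [trace_mul_cycle, hZW, trace_one, Fintype.card_fin]
  calc _ = 2 * trace (W * (∑ i : Fin p, ∑ j : Fin q,
              ((single i j (1 : ℝ))ᵀ * Z + Zᵀ * single i j (1 : ℝ)) * W *
                ((single i j (1 : ℝ))ᵀ * Z + Zᵀ * single i j (1 : ℝ))) * W) -
          2 * trace (W * (∑ i : Fin p, ∑ j : Fin q,
              (single i j (1 : ℝ))ᵀ * single i j (1 : ℝ)) * W) := by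
        simp only [Matrix.sum_mul, trace_sum, Finset.mul_sum, Finset.sum_sub_distrib]
    _ = 2 * trace (W * (Wᵀ * Zᵀ * Z + trace (Z * W * Zᵀ) • 1 + trace W • (Zᵀ * Z) +
              Zᵀ * Z * Wᵀ) * W) -
          2 * trace (W * ((p : ℝ) • 1) * W) := by
        rw [sum_gramDeriv_mul_gramDeriv, sum_transpose_single_mul_single, Fintype.card_fin]
    _ = _ := by
        rw [hWt, htr]
        simp [Matrix.mul_add, Matrix.add_mul, hWZ, hZW, Matrix.mul_assoc, sq]
        ring
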